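/- Let n be a real number with n ≥ −1 and n ≠ 0, and define K on the open set U = {(x, y) ∈ ℝ² : |y| < x} by K(x, y) = sgn(n)·xⁿ/(x² − y²)ⁿ. Then the Hessian matrix of K (the 2×2 matrix of second partial derivatives) is positive semidefinite at every point of U. -/

import Mathlib

/-!
On `|y| < x` one has `K = sgn(n) · g^(-n)` with `g = x - y²/x = (x² - y²)/x > 0`, and `g` is
concave because `y²/x` (the perspective of `y²`) is convex. For `n ≥ -1` the function
`t ↦ sgn(n) · t^(-n)` is convex and nonincreasing on `(0, ∞)`, so `K` is convex. A convex `C²`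
function has a positive semidefinite Hessian: along every line its derivative is monotone, and
the Hessian is symmetric by Schwarz's theorem.
-/

/-- Partial derivative with respect to the first variable. -/
noncomputable def pdx (f : ℝ × ℝ → ℝ) (p : ℝ × ℝ) : ℝ := fderiv ℝ f p (1, 0)

/-- Partial derivative with respect to the second variable. -/
noncomputable def pdy (f : ℝ × ℝ → ℝ) (p : ℝ × ℝ) : ℝ := fderiv ℝ f p (0, 1)

/-- The Hessian matrix of second partial derivatives. -/
noncomputable def hessian (f : ℝ × ℝ → ℝ) (p : ℝ × ℝ) : Matrix (Fin 2) (Fin 2) ℝ :=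
  !![pdx (pdx f) p, pdx (pdy f) p;
     pdy (pdx f) p, pdy (pdy f) p]

open Real Set Filter Topology

lemma convexOn_rpow_of_nonpos {p : ℝ} (hp : p ≤ 0) : ConvexOn ℝ (Ioi 0) fun x : ℝ ↦ x ^ p := by
  refine ⟨convex_Ioi 0, fun x (hx : 0 < x) y (hy : 0 < y) a b ha hb hab ↦ ?_⟩
  calc (a • x + b • y) ^ p ≤ (x ^ a * y ^ b) ^ p :=
        rpow_le_rpow_of_nonpos (by positivity)
          (geom_mean_le_arith_mean2_weighted ha hb hx.le hy.le hab) hp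
    _ = (x ^ p) ^ a * (y ^ p) ^ b := by
        rw [mul_rpow (by positivity) (by positivity), ← rpow_mul hx.le, ← rpow_mul hy.le,
          ← rpow_mul hx.le, ← rpow_mul hy.le, mul_comm a, mul_comm b]
    _ ≤ a • x ^ p + b • y ^ p :=
        geom_mean_le_arith_mean2_weighted ha hb (by positivity) (by positivity) hab

lemma convexOn_sign_mul_rpow_neg {n : ℝ} (hn : -1 ≤ n) :
    ConvexOn ℝ (Ioi 0) fun t : ℝ ↦ sign n * t ^ (-n) := by
  rcases lt_trichotomy n 0 with hneg | rfl | hpos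
  · simp only [sign_of_neg hneg, neg_one_mul]
    exact (concaveOn_rpow (by linarith) (by linarith)).neg.subset Ioi_subset_Ici_self (convex_Ioi 0)
  · simpa using convexOn_const (0 : ℝ) (convex_Ioi 0)
  · simpa only [sign_of_pos hpos, one_mul] using convexOn_rpow_of_nonpos (by linarith)

lemma antitoneOn_sign_mul_rpow_neg (n : ℝ) :
    AntitoneOn (fun t : ℝ ↦ sign n * t ^ (-n)) (Ioi 0) := by
  rcases lt_trichotomy n 0 with hneg | rfl | hpos
  · simp only [sign_of_neg hneg, neg_one_mul]
    exact ((monotoneOn_rpow_Ici_of_exponent_nonneg (by linarith)).mono Ioi_subset_Ici_self).neg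
  · simp [antitoneOn_const]
  · simpa only [sign_of_pos hpos, one_mul] using
      antitoneOn_rpow_Ioi_of_exponent_nonpos (by linarith)

theorem ConvexOn.comp_concaveOn_of_mapsTo {E : Type*} [AddCommGroup E] [Module ℝ E]
    {s : Set E} {t : Set ℝ} {g : E → ℝ} {h : ℝ → ℝ}
    (hh : ConvexOn ℝ t h) (hg : ConcaveOn ℝ s g) (hh' : AntitoneOn h t) (hst : MapsTo g s t) :
    ConvexOn ℝ s (h ∘ g) := by
  refine ⟨hg.1, fun x hx y hy a b ha hb hab ↦ ?_⟩
  calc h (g (a • x + b • y)) ≤ h (a • g x + b • g y) :=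
        hh' (hh.1 (hst hx) (hst hy) ha hb hab) (hst (hg.1 hx hy ha hb hab)) (hg.2 hx hy ha hb hab)
    _ ≤ a • h (g x) + b • h (g y) := hh.2 (hst hx) (hst hy) ha hb hab

lemma convexOn_sq_snd_div_fst : ConvexOn ℝ {q : ℝ × ℝ | 0 < q.1} fun q ↦ q.2 ^ 2 / q.1 := by
  refine ⟨convex_halfSpace_gt (LinearMap.fst ℝ ℝ ℝ).isLinear 0, ?_⟩
  rintro ⟨x₁, y₁⟩ (h₁ : 0 < x₁) ⟨x₂, y₂⟩ (h₂ : 0 < x₂) a b ha hb hab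
  simp only [Prod.smul_mk, Prod.mk_add_mk, smul_eq_mul]
  obtain ⟨u, rfl⟩ : ∃ u, y₁ = u * x₁ := ⟨y₁ / x₁, by field_simp⟩
  obtain ⟨v, rfl⟩ : ∃ v, y₂ = v * x₂ := ⟨y₂ / x₂, by field_simp⟩
  rcases ha.eq_or_lt with rfl | ha
  · simp_all
  have hx : 0 < a * x₁ + b * x₂ := by positivity
  rw [div_le_iff₀ hx]
  field_simp
  nlinarith [mul_nonneg (mul_nonneg (mul_nonneg ha.le hb) (mul_nonneg h₁.le h₂.le))
    (sq_nonneg (u - v))]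

lemma concaveOn_fst_sub_sq_snd_div_fst :
    ConcaveOn ℝ {q : ℝ × ℝ | 0 < q.1} fun q ↦ q.1 - q.2 ^ 2 / q.1 :=
  (LinearMap.fst ℝ ℝ ℝ).concaveOn convexOn_sq_snd_div_fst.1 |>.sub convexOn_sq_snd_div_fst

theorem ConvexOn.fderiv_fderiv_apply_self_nonneg {E : Type*} [NormedAddCommGroup E]
    [NormedSpace ℝ E] {s : Set E} {f : E → ℝ} {p : E}
    (hf : ConvexOn ℝ s f) (hs : s ∈ 𝓝 p) (hf₂ : ContDiffAt ℝ 2 f p) (v : E) :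
    0 ≤ fderiv ℝ (fderiv ℝ f) p v v := by
  obtain ⟨ε, hε, hball⟩ := Metric.mem_nhds_iff.1
    (inter_mem hs ((hf₂.eventually (by simp)).mono fun q hq ↦ hq.differentiableAt two_ne_zero))
  set line : ℝ →ᵃ[ℝ] E := AffineMap.lineMap p (p + v)
  have hline (t : ℝ) : HasDerivAt line v t := by
    simpa [line] using AffineMap.hasDerivAt_lineMap (a := p) (b := p + v) (x := t)
  set S := line ⁻¹' Metric.ball p ε
  have hS : IsOpen S := Metric.isOpen_ball.preimage line.continuous_of_finiteDimensional
  have hS0 : (0 : ℝ) ∈ S := by simp [S, line, hε]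
  have hconv : ConvexOn ℝ S (f ∘ line) :=
    (hf.subset (fun q hq ↦ (hball hq).1) (convex_ball p ε)).comp_affineMap line
  have hderiv : ∀ t ∈ S, HasDerivAt (f ∘ line) (fderiv ℝ f (line t) v) t := fun t ht ↦
    (hball ht).2.hasFDerivAt.comp_hasDerivAt t (hline t)
  have hmono : MonotoneOn (deriv (f ∘ line)) S :=
    hconv.monotoneOn_deriv fun t ht ↦ (hderiv t ht).differentiableAt
  have hfd : HasFDerivAt (fderiv ℝ f) (fderiv ℝ (fderiv ℝ f) p) (line 0) := by
    simpa [line] using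
      ((hf₂.fderiv_right (m := 1) le_rfl).differentiableAt one_ne_zero).hasFDerivAt
  have hsnd : HasDerivAt (deriv (f ∘ line)) (fderiv ℝ (fderiv ℝ f) p v v) 0 := by
    refine ((hfd.comp_hasDerivAt 0 (hline 0)).clm_apply (hasDerivAt_const 0 v)).congr_deriv
      (by simp) |>.congr_of_eventuallyEq ?_
    filter_upwards [hS.mem_nhds hS0] with t ht using (hderiv t ht).deriv
  exact hsnd.hasDerivWithinAt.nonneg_of_monotoneOn
    (by simpa using PerfectSpace.univ_preperfect.open_inter hS (x := 0) ⟨hS0, mem_univ _⟩) hmono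

lemma hessian_eq_fderiv_fderiv {f : ℝ × ℝ → ℝ} {p : ℝ × ℝ}
    (hf : DifferentiableAt ℝ (fderiv ℝ f) p) :
    hessian f p = Matrix.of fun i j ↦
      fderiv ℝ (fderiv ℝ f) p (Module.Basis.finTwoProd ℝ i) (Module.Basis.finTwoProd ℝ j) := by
  have hclm (v w : ℝ × ℝ) :
      fderiv ℝ (fun q ↦ fderiv ℝ f q v) p w = fderiv ℝ (fderiv ℝ f) p w v := by
    simp [fderiv_clm_apply hf (differentiableAt_const v)]
  ext i j
  fin_cases i <;> fin_cases j <;> exact (hclm _ _).trans (by simp)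

lemma Matrix.posSemidef_of_apply_self_nonneg {ι E : Type*} [Fintype ι] [NormedAddCommGroup E]
    [NormedSpace ℝ E] (b : ι → E) (B : E →L[ℝ] E →L[ℝ] ℝ)
    (hsymm : ∀ v w, B v w = B w v) (hnonneg : ∀ v, 0 ≤ B v v) :
    (Matrix.of fun i j ↦ B (b i) (b j)).PosSemidef := by
  refine posSemidef_iff_dotProduct_mulVec.2
    ⟨?_, fun x ↦ (hnonneg (∑ i, x i • b i)).trans_eq ?_⟩
  · ext i j
    simp [conjTranspose_apply, hsymm]
  · simp only [map_sum, map_smul, _root_.sum_apply, _root_.smul_apply, smul_eq_mul, Finset.mul_sum,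
      dotProduct, Pi.star_apply, star_trivial, mulVec, of_apply, mul_comm]
    rw [Finset.sum_comm]
    simp only [mul_left_comm]

theorem ConvexOn.hessian_posSemidef {s : Set (ℝ × ℝ)} {f : ℝ × ℝ → ℝ} {p : ℝ × ℝ}
    (hf : ConvexOn ℝ s f) (hs : s ∈ 𝓝 p) (hf₂ : ContDiffAt ℝ 2 f p) :
    (hessian f p).PosSemidef := by
  rw [hessian_eq_fderiv_fderiv ((hf₂.fderiv_right (m := 1) le_rfl).differentiableAt one_ne_zero)]
  exact Matrix.posSemidef_of_apply_self_nonneg _ _ (hf₂.isSymmSndFDerivAt (by simp))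
    (hf.fderiv_fderiv_apply_self_nonneg hs hf₂)

lemma isOpen_abs_snd_lt_fst : IsOpen {q : ℝ × ℝ | |q.2| < q.1} :=
  isOpen_lt continuous_snd.abs continuous_fst

lemma convex_abs_snd_lt_fst : Convex ℝ {q : ℝ × ℝ | |q.2| < q.1} := by
  simpa [sub_neg] using ((convexOn_univ_norm (E := ℝ)).comp_linearMap (LinearMap.snd ℝ ℝ ℝ)
    |>.sub ((LinearMap.fst ℝ ℝ ℝ).concaveOn convex_univ)).convex_lt 0

lemma contDiffAt_sign_mul_rpow_div_rpow (n : ℝ) {k : WithTop ℕ∞} {p : ℝ × ℝ} (hp : |p.2| < p.1) :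
    ContDiffAt ℝ k (fun q : ℝ × ℝ ↦ sign n * q.1 ^ n / (q.1 ^ 2 - q.2 ^ 2) ^ n) p := by
  have hx : 0 < p.1 := (abs_nonneg _).trans_lt hp
  have hw : 0 < p.1 ^ 2 - p.2 ^ 2 := sub_pos.2 (sq_lt_sq.2 (hp.trans_le (le_abs_self _)))
  exact (contDiffAt_const.mul (contDiffAt_fst.rpow_const_of_ne hx.ne')).div
    ((contDiffAt_fst.pow 2 |>.sub (contDiffAt_snd.pow 2)).rpow_const_of_ne hw.ne')
    (rpow_pos_of_pos hw n).ne'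

lemma convexOn_sign_mul_rpow_div_rpow {n : ℝ} (hn : -1 ≤ n) :
    ConvexOn ℝ {q : ℝ × ℝ | |q.2| < q.1}
      (fun q : ℝ × ℝ ↦ sign n * q.1 ^ n / (q.1 ^ 2 - q.2 ^ 2) ^ n) := by
  have hpos {q : ℝ × ℝ} (hq : |q.2| < q.1) : 0 < q.1 := (abs_nonneg _).trans_lt hq
  have hw {q : ℝ × ℝ} (hq : |q.2| < q.1) : 0 < q.1 ^ 2 - q.2 ^ 2 :=
    sub_pos.2 (sq_lt_sq.2 (hq.trans_le (le_abs_self _)))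
  have hg {q : ℝ × ℝ} (hq : |q.2| < q.1) : q.1 - q.2 ^ 2 / q.1 = (q.1 ^ 2 - q.2 ^ 2) / q.1 := by
    field_simp [(hpos hq).ne']
  refine ((convexOn_sign_mul_rpow_neg hn).comp_concaveOn_of_mapsTo
    (concaveOn_fst_sub_sq_snd_div_fst.subset (fun q hq ↦ hpos hq) convex_abs_snd_lt_fst)
    (antitoneOn_sign_mul_rpow_neg n) fun q hq ↦ ?_).congr fun q hq ↦ ?_
  · rw [mem_Ioi, hg hq]
    exact div_pos (hw hq) (hpos hq)
  · simp only [Function.comp_apply, hg hq, rpow_neg (div_pos (hw hq) (hpos hq)).le,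
      div_rpow (hw hq).le (hpos hq).le, inv_div, mul_div_assoc]

theorem powers_of_mean_curvature_convex (n : ℝ) (hn1 : -1 ≤ n)
    (K : ℝ × ℝ → ℝ)
    (hK : K = fun q : ℝ × ℝ => Real.sign n * q.1 ^ n / (q.1 ^ 2 - q.2 ^ 2) ^ n) :
    ∀ p : ℝ × ℝ, |p.2| < p.1 → (hessian K p).PosSemidef := by
  subst hK
  intro p hp
  exact (convexOn_sign_mul_rpow_div_rpow hn1).hessian_posSemidef
    (isOpen_abs_snd_lt_fst.mem_nhds hp) (contDiffAt_sign_mul_rpow_div_rpow n hp)
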